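/- If an object o is such that atoms(o) contains a gap (there exist a ∈ atoms(o) and a' ∈ uset(a) with a' < a and a' ∉ atoms(o)), then o is not a canonical form, i.e., there exists an object o' isomorphic to o with o' < o. -/

import Mathlib

/-- Objects built inductively from atoms by finite tuples and finite sets
(a set node carries the list of its elements). -/
inductive Obj (A : Type) : Type
  | atom : A → Obj A
  | tup  : List (Obj A) → Obj A
  | sett : List (Obj A) → Obj A

/-- Applying a map on atoms to an object, recursively. -/
def Obj.applyPerm {A : Type} (π : A → A) : Obj A → Obj A
  | .atom a => .atom (π a)
  | .tup l => .tup (l.attach.map (fun o => Obj.applyPerm π o.1))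
  | .sett l => .sett (l.attach.map (fun o => Obj.applyPerm π o.1))
decreasing_by all_goals (have := List.sizeOf_lt_of_mem o.2; simp at this ⊢; omega)

/-- The list of atoms occurring in an object. -/
def Obj.atomsList {A : Type} : Obj A → List A
  | .atom a => [a]
  | .tup l => l.attach.flatMap (fun o => Obj.atomsList o.1)
  | .sett l => l.attach.flatMap (fun o => Obj.atomsList o.1)
decreasing_by all_goals (have := List.sizeOf_lt_of_mem o.2; simp at this ⊢; omega)

/-- The set of atoms occurring in an object. -/
def Obj.atoms {A : Type} (o : Obj A) : Set A := {a | a ∈ o.atomsList}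

/-- Well-formed objects: the element lists of set nodes are strictly sorted
(so they faithfully represent finite sets, listed in increasing order). -/
def Obj.WF {A : Type} [LinearOrder (Obj A)] : Obj A → Prop
  | .atom _ => True
  | .tup l => ∀ o ∈ l, Obj.WF o
  | .sett l => l.Pairwise (· < ·) ∧ ∀ o ∈ l, Obj.WF o

/-- Applying a map on atoms to an object, recursively; the element list of a
set node is re-sorted, so that set nodes keep representing sets. -/
def Obj.applyPermS {A : Type} [LinearOrder (Obj A)] (π : A → A) : Obj A → Obj A
  | .atom a => .atom (π a)
  | .tup l => .tup (l.attach.map (fun o => Obj.applyPermS π o.1))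
  | .sett l => .sett ((l.attach.map (fun o => Obj.applyPermS π o.1)).mergeSort
      (fun a b => decide (a ≤ b)))
decreasing_by all_goals (have := List.sizeOf_lt_of_mem o.2; simp at this ⊢; omega)

/-!
Swap `a` with the smaller atom `a'` of its uset. As `a'` does not occur in `o`, this moves every
atom of `o` weakly down. Lexicographic comparison is monotone under entrywise decrease, and so is
re-sorting the elements of a set node (its `k`-th smallest element can only decrease); since the
swap is injective on well-formed objects, re-sorted set nodes stay strictly sorted and the
comparison of sets applies. So the swapped object is `≤ o`, and it differs from `o` because `a'`
occurs in it.
-/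

namespace List

variable {α : Type*} [LinearOrder α]

theorem Forall₂.eq_or_lex_lt {l₁ l₂ : List α} (h : Forall₂ (· ≤ ·) l₁ l₂) :
    l₁ = l₂ ∨ Lex (· < ·) l₁ l₂ := by
  induction h with
  | nil => exact Or.inl rfl
  | cons hab _ ih =>
    obtain hab | rfl := hab.lt_or_eq
    · exact Or.inr (.rel hab)
    · obtain rfl | h := ih
      exacts [Or.inl rfl, Or.inr (.cons h)]

/- If `s[i] > l₂[i]`, then the `i + 1` first entries of `l₁` are `≤ l₂[i]`, but at most `i`
entries of `s` are. -/
theorem Forall₂.of_perm_left_of_sortedLE {s l₁ l₂ : List α}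
    (h : Forall₂ (· ≤ ·) l₁ l₂) (hs : s.SortedLE) (hp : s ~ l₁) (hl₂ : l₂.SortedLE) :
    Forall₂ (· ≤ ·) s l₂ := by
  refine forall₂_iff_get.mpr ⟨hp.length_eq.trans h.length_eq, fun i hi hi₂ => ?_⟩
  by_contra! hlt
  simp only [get_eq_getElem] at hlt
  let p : α → Bool := fun x => x ≤ l₂[i]
  have hl₁ : i + 1 ≤ l₁.countP p := by
    have hi₁ : i < l₁.length := h.length_eq ▸ hi₂
    calc i + 1 = (l₁.take (i + 1)).countP p := by
          rw [countP_eq_length.mpr, length_take_of_le hi₁]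
          intro x hx
          obtain ⟨j, hj, rfl⟩ := getElem_of_mem hx
          rw [length_take_of_le hi₁] at hj
          simpa [p] using (h.get (by omega) (by omega)).trans
            (hl₂.getElem_le_getElem_of_le (Nat.le_of_lt_succ hj))
      _ ≤ l₁.countP p := (take_sublist _ _).countP_le
  have hs_count : s.length - i ≤ s.countP (fun x => ¬p x) := by
    calc s.length - i = (s.drop i).countP (fun x => ¬p x) := by
          rw [countP_eq_length.mpr, length_drop]
          intro x hx
          obtain ⟨j, hj, rfl⟩ := getElem_of_mem hx
          simpa [p] using hlt.trans_le (hs.getElem_le_getElem_of_le (by omega))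
      _ ≤ s.countP (fun x => ¬p x) := (drop_sublist _ _).countP_le
  have := length_eq_countP_add_countP p (l := s)
  rw [hp.countP_eq] at this
  omega

end List

theorem Equiv.swap_apply_le_self {α : Type*} [LinearOrder α] {a a' x : α} (h : a' ≤ a)
    (hx : x ≠ a') : swap a a' x ≤ x := by
  rw [swap_apply_def]
  split_ifs with hxa
  · exact hxa ▸ h
  · exact le_rfl

theorem Equiv.swap_apply_mem_uset {α : Type*} [DecidableEq α] {uset : α → Set α}
    (h1 : ∀ a, a ∈ uset a) (h2 : ∀ a b, uset a = uset b ∨ uset a ∩ uset b = ∅)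
    {a a' : α} (ha' : a' ∈ uset a) (x : α) :
    swap a a' x ∈ uset x := by
  have hsame : uset a' = uset a :=
    (h2 a' a).resolve_right fun h => (h ▸ ⟨h1 a', ha'⟩ : a' ∈ (∅ : Set α))
  rw [swap_apply_def]
  split_ifs with hxa hxa'
  · exact hxa ▸ ha'
  · exact hxa' ▸ hsame ▸ h1 a
  · exact h1 x

namespace Obj

variable {A : Type}

@[simp] theorem mem_atomsList_atom {a b : A} : a ∈ (atom b).atomsList ↔ a = b := by
  rw [atomsList]; simp

@[simp] theorem mem_atomsList_tup {a : A} {l : List (Obj A)} :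
    a ∈ (tup l).atomsList ↔ ∃ e ∈ l, a ∈ e.atomsList := by
  rw [atomsList]; simp

@[simp] theorem mem_atomsList_sett {a : A} {l : List (Obj A)} :
    a ∈ (sett l).atomsList ↔ ∃ e ∈ l, a ∈ e.atomsList := by
  rw [atomsList]; simp

variable [LinearOrder (Obj A)]

theorem wf_tup {l : List (Obj A)} : (tup l).WF ↔ ∀ o ∈ l, o.WF := by rw [WF]

theorem wf_sett {l : List (Obj A)} :
    (sett l).WF ↔ l.Pairwise (· < ·) ∧ ∀ o ∈ l, o.WF := by
  rw [WF]

@[simp] theorem applyPermS_atom (π : A → A) (a : A) : (atom a).applyPermS π = atom (π a) := by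
  rw [applyPermS]

@[simp] theorem applyPermS_tup (π : A → A) (l : List (Obj A)) :
    (tup l).applyPermS π = tup (l.map (applyPermS π)) := by
  rw [applyPermS]; simp

@[simp] theorem applyPermS_sett (π : A → A) (l : List (Obj A)) :
    (sett l).applyPermS π = sett ((l.map (applyPermS π)).mergeSort (· ≤ ·)) := by
  rw [applyPermS]; simp

theorem mem_atomsList_applyPermS (π : A → A) {x : A} :
    ∀ u : Obj A, x ∈ u.atomsList → π x ∈ (u.applyPermS π).atomsList
  | .atom a, hx => by simp_all
  | .tup l, hx => by
    obtain ⟨e, he, hxe⟩ := mem_atomsList_tup.mp hx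
    simpa using ⟨e, he, mem_atomsList_applyPermS π e hxe⟩
  | .sett l, hx => by
    obtain ⟨e, he, hxe⟩ := mem_atomsList_sett.mp hx
    simpa using ⟨e, he, mem_atomsList_applyPermS π e hxe⟩
termination_by u => sizeOf u
decreasing_by all_goals (have := List.sizeOf_lt_of_mem he; simp at this ⊢; omega)

theorem applyPermS_applyPermS_of_leftInverse {π σ : A → A} (hσ : Function.LeftInverse σ π) :
    ∀ u : Obj A, u.WF → (u.applyPermS π).applyPermS σ = u
  | .atom a, _ => by simp [hσ a]
  | .tup l, hu => by
    simp only [applyPermS_tup, List.map_map, tup.injEq]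
    exact (List.map_congr_left fun e he =>
      applyPermS_applyPermS_of_leftInverse hσ e (wf_tup.mp hu e he)).trans l.map_id
  | .sett l, hu => by
    have hl : (l.map (applyPermS π)).map (applyPermS σ) = l := by
      rw [List.map_map]
      exact (List.map_congr_left fun e he =>
        applyPermS_applyPermS_of_leftInverse hσ e ((wf_sett.mp hu).2 e he)).trans l.map_id
    simp only [applyPermS_sett, sett.injEq]
    refine List.Perm.eq_of_sortedLE List.sortedLE_mergeSort
      (wf_sett.mp hu).1.sortedLT.sortedLE ?_
    calc List.Perm _ (((l.map (applyPermS π)).mergeSort (· ≤ ·)).map (applyPermS σ)) :=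
          List.mergeSort_perm _ _
      List.Perm _ ((l.map (applyPermS π)).map (applyPermS σ)) := (List.mergeSort_perm _ _).map _
      _ = l := hl
termination_by u => sizeOf u
decreasing_by all_goals (have := List.sizeOf_lt_of_mem he; simp at this ⊢; omega)

theorem applyPermS_injOn (π : Equiv.Perm A) : {u : Obj A | u.WF}.InjOn (applyPermS π) :=
  fun u hu v hv huv => by
    have hσ : Function.LeftInverse π.symm π := π.symm_apply_apply
    rw [← applyPermS_applyPermS_of_leftInverse hσ u hu, huv,
      applyPermS_applyPermS_of_leftInverse hσ v hv]

theorem applyPermS_le [LinearOrder A] (hatom : Monotone (atom : A → Obj A))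
    (htup : ∀ l₁ l₂ : List (Obj A), l₁.length = l₂.length →
      List.Lex (· < ·) l₁ l₂ → tup l₁ < tup l₂)
    (hsett : ∀ l₁ l₂ : List (Obj A), l₁.Pairwise (· < ·) → l₂.Pairwise (· < ·) →
      List.Lex (· < ·) l₁ l₂ → sett l₁ < sett l₂)
    (π : Equiv.Perm A) :
    ∀ u : Obj A, u.WF → (∀ x ∈ u.atomsList, π x ≤ x) → u.applyPermS π ≤ u
  | .atom a, _, hle => by simpa using hatom (hle a (by simp))
  | .tup l, hu, hle => by
    have hl : List.Forall₂ (· ≤ ·) (l.map (applyPermS π)) l :=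
      List.forall₂_map_left_iff.mpr <| List.forall₂_same.mpr fun e he =>
        applyPermS_le hatom htup hsett π e (wf_tup.mp hu e he)
          fun x hx => hle x (mem_atomsList_tup.mpr ⟨e, he, hx⟩)
    rw [applyPermS_tup]
    obtain h | h := hl.eq_or_lex_lt
    · rw [h]
    · exact (htup _ _ (List.length_map _) h).le
  | .sett l, hu, hle => by
    obtain ⟨hsorted, hwf⟩ := wf_sett.mp hu
    have hl : List.Forall₂ (· ≤ ·) (l.map (applyPermS π)) l :=
      List.forall₂_map_left_iff.mpr <| List.forall₂_same.mpr fun e he =>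
        applyPermS_le hatom htup hsett π e (hwf e he)
          fun x hx => hle x (mem_atomsList_sett.mpr ⟨e, he, hx⟩)
    have hnodup : (l.map (applyPermS π)).Nodup :=
      hsorted.nodup.map_on fun u hu v hv => applyPermS_injOn π (hwf u hu) (hwf v hv)
    have hsorted' : ((l.map (applyPermS π)).mergeSort (· ≤ ·)).Pairwise (· < ·) :=
      (List.sortedLE_mergeSort.sortedLT_of_nodup
        ((List.mergeSort_perm _ _).nodup_iff.mpr hnodup)).pairwise
    rw [applyPermS_sett]
    obtain h | h := (hl.of_perm_left_of_sortedLE List.sortedLE_mergeSort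
      (List.mergeSort_perm _ _) hsorted.sortedLT.sortedLE).eq_or_lex_lt
    · rw [h]
    · exact (hsett _ _ hsorted' hsorted h).le
termination_by u => sizeOf u
decreasing_by all_goals (have := List.sizeOf_lt_of_mem he; simp at this ⊢; omega)

end Obj

theorem gap_not_canonical_general {A : Type} [LinearOrder A] [LinearOrder (Obj A)]
    (hatom : ∀ a b : A, Obj.atom a < Obj.atom b ↔ a < b)
    (htup : ∀ l₁ l₂ : List (Obj A), l₁.length = l₂.length →
        (Obj.tup l₁ < Obj.tup l₂ ↔ List.Lex (· < ·) l₁ l₂))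
    (hsett : ∀ l₁ l₂ : List (Obj A), l₁.Pairwise (· < ·) → l₂.Pairwise (· < ·) →
        (Obj.sett l₁ < Obj.sett l₂ ↔ List.Lex (· < ·) l₁ l₂))
    (uset : A → Set A) (h1 : ∀ a, a ∈ uset a)
    (h2 : ∀ a b, uset a = uset b ∨ uset a ∩ uset b = ∅)
    (o : Obj A) (hwf : o.WF)
    (hgap : ∃ a ∈ o.atoms, ∃ a' ∈ uset a, a' < a ∧ a' ∉ o.atoms) :
    ∃ o' : Obj A,
      (∃ π : Equiv.Perm A, (∀ x, π x ∈ uset x) ∧ o' = o.applyPermS π) ∧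
      o' < o := by
  obtain ⟨a, ha, a', ha', hlt, hna'⟩ := hgap
  let π := Equiv.swap a a'
  have hπ_le : ∀ x ∈ o.atomsList, π x ≤ x := fun x hx =>
    Equiv.swap_apply_le_self hlt.le fun hxa' => hna' (hxa' ▸ hx)
  have hle : o.applyPermS π ≤ o :=
    Obj.applyPermS_le (StrictMono.monotone fun a b => (hatom a b).mpr)
      (fun l₁ l₂ h => (htup l₁ l₂ h).mpr) (fun l₁ l₂ h₁ h₂ => (hsett l₁ l₂ h₁ h₂).mpr)
      π o hwf hπ_le
  have hne : o.applyPermS π ≠ o := fun heq => by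
    have := Obj.mem_atomsList_applyPermS π o ha
    rw [heq, Equiv.swap_apply_left] at this
    exact hna' this
  exact ⟨o.applyPermS π, ⟨π, Equiv.swap_apply_mem_uset h1 h2 ha', rfl⟩,
    lt_of_le_of_ne hle hne⟩

/-- if atoms(o) contains a gap then o is not a canonical form:
some object isomorphic to o is strictly smaller. -/
theorem gap_not_canonical {A : Type} [LinearOrder A] [LinearOrder (Obj A)] [WellFoundedLT (Obj A)]
    (hatom : ∀ a b : A, Obj.atom a < Obj.atom b ↔ a < b)
    (htup : ∀ l₁ l₂ : List (Obj A), l₁.length = l₂.length →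
        (Obj.tup l₁ < Obj.tup l₂ ↔ List.Lex (· < ·) l₁ l₂))
    (hsett : ∀ l₁ l₂ : List (Obj A), l₁.Pairwise (· < ·) → l₂.Pairwise (· < ·) →
        (Obj.sett l₁ < Obj.sett l₂ ↔ List.Lex (· < ·) l₁ l₂))
    (uset : A → Set A) (h1 : ∀ a, a ∈ uset a)
    (h2 : ∀ a b, uset a = uset b ∨ uset a ∩ uset b = ∅)
    (o : Obj A) (hwf : o.WF)
    (hgap : ∃ a ∈ o.atoms, ∃ a' ∈ uset a, a' < a ∧ a' ∉ o.atoms) :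
    ∃ o' : Obj A,
      (∃ π : Equiv.Perm A, (∀ x, π x ∈ uset x) ∧ o' = o.applyPermS π) ∧
      o' < o :=
  gap_not_canonical_general hatom htup hsett uset h1 h2 o hwf hgap
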